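/- Canonical Form Theorem: for every impartial game with activeness G^g, there exists a unique canonical game H^h with G^g = H^h. -/

import Mathlib

inductive AGame : Type where
  | mk : List AGame → Bool → AGame

namespace AGame

noncomputable instance : DecidableEq AGame := Classical.decEq _

def opts : AGame → List AGame | mk gs _ => gs
def act : AGame → Bool | mk _ g => g

theorem sizeOf_lt_of_mem {G G' : AGame} (h : G' ∈ G.opts) : sizeOf G' < sizeOf G := by
  cases G with
  | mk gs g =>
    simp only [opts] at h
    have := List.sizeOf_lt_of_mem h
    simp [AGame.mk.sizeOf_spec]
    omega

/-- Disjunctive sum of games with activeness. -/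
def add (G H : AGame) : AGame :=
  mk (G.opts.attach.map (fun x => add x.1 H) ++
      H.opts.attach.map (fun y => add G y.1)) (G.act || H.act)
termination_by sizeOf G + sizeOf H
decreasing_by
  · have := sizeOf_lt_of_mem x.2; omega
  · have := sizeOf_lt_of_mem y.2; omega

/-- `PPos G` means the outcome of `G` is 𝒫 (second player wins). -/
def PPos (G : AGame) : Prop :=
  G.act = false ∨ ∀ G' ∈ G.opts.attach, ¬ PPos G'.1
termination_by sizeOf G
decreasing_by
  have := sizeOf_lt_of_mem G'.2; omega

/-- Hereditary set-equality (the paper's ≅). -/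
def Identical (G H : AGame) : Prop :=
  G.act = H.act ∧ (∀ G' ∈ G.opts.attach, ∃ H' ∈ H.opts.attach, Identical G'.1 H'.1)
              ∧ (∀ H' ∈ H.opts.attach, ∃ G' ∈ G.opts.attach, Identical G'.1 H'.1)
termination_by sizeOf G + sizeOf H
decreasing_by
  · have := sizeOf_lt_of_mem G'.2; have := sizeOf_lt_of_mem H'.2; omega
  · have := sizeOf_lt_of_mem G'.2; have := sizeOf_lt_of_mem H'.2; omega

/-- Equivalence of games with activeness: same outcome in every sum. -/
def Equiv (G H : AGame) : Prop := ∀ X : AGame, (PPos (add G X) ↔ PPos (add H X))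

end AGame

namespace AGame

/-- Nimbers with activeness: `star γ n ≅ {star γ j : j < n}^{γ n}`. -/
def star (γ : ℕ → Bool) : ℕ → AGame
  | n => mk ((List.range n).attach.map (fun j => star γ j.1)) (γ n)
termination_by n => n
decreasing_by
  have := j.2; simp [List.mem_range] at this; omega

/-- The generalized Grundy set `𝒢^γ(G)`. -/
def GSet (γ : ℕ → Bool) (G : AGame) : Set ℕ := {n | PPos (add G (star γ n))}

/-- Minimum excludant of a set of naturals. -/
noncomputable def mex (S : Set ℕ) : ℕ := sInf {n | n ∉ S}

/-- Ordinary Grundy value, computed ignoring activeness. -/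
noncomputable def grundy (G : AGame) : ℕ :=
  mex {m | ∃ G' ∈ G.opts.attach, grundy G'.1 = m}
termination_by sizeOf G
decreasing_by
  have := sizeOf_lt_of_mem G'.2; omega

/-- The three types of games with activeness. -/
inductive AType : Type where
  | inactive : AType            -- type 0
  | activeSomeInactive : AType  -- type 1_{∃0}
  | activeAllActive : AType     -- type 1_{∀1}

open Classical in
/-- `type(G^g)`. -/
noncomputable def typ (G : AGame) : AType :=
  if G.act = false then .inactive
  else if ∃ G' ∈ G.opts, G'.act = false then .activeSomeInactive
  else .activeAllActive

/-- Formal birthday `b(G)`. -/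
def bday (G : AGame) : ℕ :=
  (G.opts.attach.map (fun G' => bday G'.1 + 1)).foldr max 0
termination_by sizeOf G
decreasing_by
  have := sizeOf_lt_of_mem G'.2; omega

/-- An option `G'` of `G` is reversible if it has an option equivalent to `G`. -/
def Reversible (G G' : AGame) : Prop := ∃ G'' ∈ G'.opts, Equiv G'' G

/-- A canonical game: all options canonical and no option reversible. -/
def Canonical (G : AGame) : Prop :=
  (∀ G' ∈ G.opts.attach, Canonical G'.1) ∧ (∀ G' ∈ G.opts, ¬ Reversible G G')
termination_by sizeOf G
decreasing_by
  have := sizeOf_lt_of_mem G'.2; omega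

/-- A transitive game: all options transitive and options of options are options. -/
def TransGame (G : AGame) : Prop :=
  (∀ G' ∈ G.opts.attach, TransGame G'.1) ∧ (∀ G' ∈ G.opts, ∀ G'' ∈ G'.opts, G'' ∈ G.opts)
termination_by sizeOf G
decreasing_by
  have := sizeOf_lt_of_mem G'.2; omega

/-- `G` is covered by `H` if every option of `G` is equivalent to some option of `H`. -/
def Covered (G H : AGame) : Prop := ∀ G' ∈ G.opts, ∃ H' ∈ H.opts, Equiv G' H'

/-- The relation `G ⋈ H`. -/
def Bowtie (G H : AGame) : Prop :=
  (∀ G' ∈ G.opts, ¬ Equiv G' H) ∧ (∀ H' ∈ H.opts, ¬ Equiv G H')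

/-- The linear chain `∅^{g₀ g₁ … gₙ}`. -/
def chain (g : ℕ → Bool) : ℕ → AGame
  | 0 => mk [] (g 0)
  | n + 1 => mk [chain g n] (g (n + 1))

end AGame
namespace AGame

theorem opts_mk (gs : List AGame) (g : Bool) : (mk gs g).opts = gs := rfl
theorem act_mk (gs : List AGame) (g : Bool) : (mk gs g).act = g := rfl
theorem eta (G : AGame) : mk G.opts G.act = G := by cases G; rfl

theorem act_add (G H : AGame) : (add G H).act = (G.act || H.act) := by
  rw [add]; rfl

theorem opts_add (G H : AGame) : (add G H).opts =
    G.opts.attach.map (fun x => add x.1 H) ++ H.opts.attach.map (fun y => add G y.1) := by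
  rw [add]; rfl

theorem mem_opts_add_left {G' : AGame} (G H : AGame) (h : G' ∈ G.opts) :
    add G' H ∈ (add G H).opts := by
  rw [opts_add]
  refine List.mem_append_left _ ?_
  exact List.mem_map.2 ⟨⟨G', h⟩, List.mem_attach _ _, rfl⟩

theorem mem_opts_add_right {H' : AGame} (G H : AGame) (h : H' ∈ H.opts) :
    add G H' ∈ (add G H).opts := by
  rw [opts_add]
  refine List.mem_append_right _ ?_
  exact List.mem_map.2 ⟨⟨H', h⟩, List.mem_attach _ _, rfl⟩

theorem mem_opts_add_cases {W G H : AGame} (h : W ∈ (add G H).opts) :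
    (∃ G' ∈ G.opts, W = add G' H) ∨ (∃ H' ∈ H.opts, W = add G H') := by
  rw [opts_add] at h
  rcases List.mem_append.1 h with h | h
  · obtain ⟨⟨x, hx⟩, -, rfl⟩ := List.mem_map.1 h
    exact Or.inl ⟨x, hx, rfl⟩
  · obtain ⟨⟨y, hy⟩, -, rfl⟩ := List.mem_map.1 h
    exact Or.inr ⟨y, hy, rfl⟩

theorem ppos_iff (G : AGame) : PPos G ↔ (G.act = false ∨ ∀ G' ∈ G.opts, ¬ PPos G') := by
  rw [PPos]
  simp only [List.mem_attach, true_implies, Subtype.forall]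

theorem ppos_of_act_false {G : AGame} (h : G.act = false) : PPos G :=
  (ppos_iff G).2 (Or.inl h)

theorem ppos_intro {G : AGame} (h : ∀ G' ∈ G.opts, ¬ PPos G') : PPos G :=
  (ppos_iff G).2 (Or.inr h)

theorem not_ppos_of_mem {G G' : AGame} (ha : G.act = true) (hm : G' ∈ G.opts)
    (hp : PPos G') : ¬ PPos G := by
  intro h
  rcases (ppos_iff G).1 h with h1 | h2
  · rw [ha] at h1; cases h1
  · exact h2 G' hm hp

theorem ppos_elim {G G' : AGame} (h : PPos G) (ha : G.act = true) (hm : G' ∈ G.opts) :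
    ¬ PPos G' := by
  rcases (ppos_iff G).1 h with h1 | h2
  · rw [ha] at h1; cases h1
  · exact h2 G' hm

theorem not_ppos_iff {G : AGame} : ¬ PPos G ↔ (G.act = true ∧ ∃ G' ∈ G.opts, PPos G') := by
  rw [ppos_iff]
  push_neg
  constructor
  · rintro ⟨h1, h2⟩
    exact ⟨Bool.of_not_eq_false h1, h2⟩
  · rintro ⟨h1, h2⟩
    exact ⟨by simp [h1], h2⟩

end AGame
namespace AGame

theorem Equiv.refl (G : AGame) : Equiv G G := fun _ => Iff.rfl
theorem Equiv.symm {G H : AGame} (h : Equiv G H) : Equiv H G := fun X => (h X).symm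
theorem Equiv.trans {G H K : AGame} (h1 : Equiv G H) (h2 : Equiv H K) : Equiv G K :=
  fun X => (h1 X).trans (h2 X)

/-- The all-active copy of a game. -/
def mirror (G : AGame) : AGame :=
  mk (G.opts.attach.map (fun x => mirror x.1)) true
termination_by sizeOf G
decreasing_by have := sizeOf_lt_of_mem x.2; omega

theorem mirror_act (G : AGame) : (mirror G).act = true := by rw [mirror]; rfl

theorem mirror_opts (G : AGame) : (mirror G).opts = G.opts.attach.map (fun x => mirror x.1) := by
  rw [mirror]; rfl

theorem mem_mirror_opts_of_mem {G G' : AGame} (h : G' ∈ G.opts) : mirror G' ∈ (mirror G).opts := by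
  rw [mirror_opts]
  exact List.mem_map.2 ⟨⟨G', h⟩, List.mem_attach _ _, rfl⟩

theorem mem_mirror_opts_cases {W G : AGame} (h : W ∈ (mirror G).opts) :
    ∃ G' ∈ G.opts, W = mirror G' := by
  rw [mirror_opts] at h
  obtain ⟨⟨x, hx⟩, -, rfl⟩ := List.mem_map.1 h
  exact ⟨x, hx, rfl⟩

theorem ppos_add_mirror (G : AGame) : PPos (add G (mirror G)) := by
  refine ppos_intro ?_
  intro W hW
  rcases mem_opts_add_cases hW with ⟨G', hG', rfl⟩ | ⟨M', hM', rfl⟩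
  · refine not_ppos_of_mem ?_ (mem_opts_add_right G' (mirror G) (mem_mirror_opts_of_mem hG'))
      (ppos_add_mirror G')
    rw [act_add, mirror_act, Bool.or_true]
  · obtain ⟨G', hG', rfl⟩ := mem_mirror_opts_cases hM'
    refine not_ppos_of_mem ?_ (mem_opts_add_left G (mirror G') hG') (ppos_add_mirror G')
    rw [act_add, mirror_act, Bool.or_true]
termination_by sizeOf G
decreasing_by
  · exact sizeOf_lt_of_mem hG'
  · exact sizeOf_lt_of_mem hG'

theorem flip_lemma {A B : AGame} (s : AGame) (h1 : PPos (add A s)) (h2 : ¬ PPos (add B s)) :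
    ∃ t : AGame, t.act = true ∧ PPos (add B t) ∧ ¬ PPos (add A t) := by
  refine ⟨mk (B.opts.map mirror ++ [s]) true, rfl, ?_, ?_⟩
  · refine ppos_intro ?_
    intro W hW
    have hsmem : s ∈ (mk (B.opts.map mirror ++ [s]) true).opts := by
      rw [opts_mk]; exact List.mem_append_right _ (List.mem_singleton.2 rfl)
    rcases mem_opts_add_cases hW with ⟨B', hB', rfl⟩ | ⟨t', ht', rfl⟩
    · -- B' + t : has P option B' + mirror B'
      have hmm : mirror B' ∈ (mk (B.opts.map mirror ++ [s]) true).opts := by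
        rw [opts_mk]; exact List.mem_append_left _ (List.mem_map.2 ⟨B', hB', rfl⟩)
      refine not_ppos_of_mem ?_ (mem_opts_add_right B' _ hmm) (ppos_add_mirror B')
      rw [act_add, act_mk, Bool.or_true]
    · rw [opts_mk] at ht'
      rcases List.mem_append.1 ht' with hmem | hmem
      · obtain ⟨B', hB', rfl⟩ := List.mem_map.1 hmem
        refine not_ppos_of_mem ?_ (mem_opts_add_left B (mirror B') hB') (ppos_add_mirror B')
        rw [act_add, mirror_act, Bool.or_true]
      · rw [List.mem_singleton.1 hmem]
        exact h2
  · have hsmem : s ∈ (mk (B.opts.map mirror ++ [s]) true).opts := by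
      rw [opts_mk]; exact List.mem_append_right _ (List.mem_singleton.2 rfl)
    refine not_ppos_of_mem ?_ (mem_opts_add_right A _ hsmem) h1
    rw [act_add, act_mk, Bool.or_true]

theorem discriminate {U V : AGame} (h : ¬ Equiv U V) :
    ∃ t : AGame, t.act = true ∧ PPos (add U t) ∧ ¬ PPos (add V t) := by
  have hX : ∃ X, ¬ (PPos (add U X) ↔ PPos (add V X)) := by
    by_contra hc; push_neg at hc; exact h hc
  obtain ⟨X, hX⟩ := hX
  rcases Classical.em (PPos (add U X)) with hU | hU
  · have hV : ¬ PPos (add V X) := fun hv => hX ⟨fun _ => hv, fun _ => hU⟩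
    obtain ⟨t1, -, ht1V, ht1U⟩ := flip_lemma X hU hV
    obtain ⟨t, ha, htU, htV⟩ := flip_lemma t1 ht1V ht1U
    exact ⟨t, ha, htU, htV⟩
  · have hV : PPos (add V X) := by
      by_contra hv
      exact hX ⟨fun h' => absurd h' hU, fun h' => absurd h' hv⟩
    obtain ⟨t, ha, htU, htV⟩ := flip_lemma X hV hU
    exact ⟨t, ha, htU, htV⟩

end AGame
namespace AGame

theorem act_eq_of_equiv {U V : AGame} (h : Equiv U V) : U.act = V.act := by
  by_contra hne
  -- helper: if U active, V inactive, Equiv fails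
  have key : ∀ A B : AGame, A.act = true → B.act = false → Equiv A B → False := by
    intro A B hA hB hAB
    have hBX : PPos (add B (mk [mirror A] false)) := by
      refine ppos_of_act_false ?_
      rw [act_add, hB, act_mk]; rfl
    have hAX : PPos (add A (mk [mirror A] false)) := (hAB _).2 hBX
    have hmem : mirror A ∈ (mk [mirror A] false).opts := by
      rw [opts_mk]; exact List.mem_singleton.2 rfl
    exact not_ppos_of_mem (by rw [act_add, hA]; rfl)
      (mem_opts_add_right A _ hmem) (ppos_add_mirror A) hAX
  cases hU : U.act <;> cases hV : V.act
  · rw [hU, hV] at hne; exact hne rfl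
  · exact key V U hV hU h.symm
  · exact key U V hU hV h
  · rw [hU, hV] at hne; exact hne rfl

theorem link {A B : AGame} (hbt : Bowtie A B) :
    ∃ T : AGame, T.act = true ∧ PPos (add A T) ∧ PPos (add B T) := by
  classical
  obtain ⟨h1, h2⟩ := hbt
  -- for each option A' of A, a discriminator t with PPos (A'+t) ∧ ¬PPos (B+t)
  have specA : ∀ x : {x // x ∈ A.opts}, ∃ t : AGame,
      t.act = true ∧ PPos (add x.1 t) ∧ ¬ PPos (add B t) :=
    fun x => discriminate (h1 x.1 x.2)
  have specB : ∀ y : {y // y ∈ B.opts}, ∃ t : AGame,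
      t.act = true ∧ PPos (add y.1 t) ∧ ¬ PPos (add A t) :=
    fun y => discriminate (fun hE => h2 y.1 y.2 hE.symm)
  choose fA hfA1 hfA2 hfA3 using specA
  choose fB hfB1 hfB2 hfB3 using specB
  set ts : List AGame := A.opts.attach.map fA ++ B.opts.attach.map fB with hts
  refine ⟨mk ts true, rfl, ?_, ?_⟩
  · refine ppos_intro ?_
    intro W hW
    rcases mem_opts_add_cases hW with ⟨A', hA', rfl⟩ | ⟨t', ht', rfl⟩
    · -- A' + T : P option A' + fA ⟨A'⟩
      have hmem : fA ⟨A', hA'⟩ ∈ (mk ts true).opts := by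
        rw [opts_mk, hts]
        exact List.mem_append_left _ (List.mem_map.2 ⟨⟨A', hA'⟩, List.mem_attach _ _, rfl⟩)
      refine not_ppos_of_mem ?_ (mem_opts_add_right A' _ hmem) (hfA2 ⟨A', hA'⟩)
      rw [act_add, act_mk, Bool.or_true]
    · rw [opts_mk, hts] at ht'
      rcases List.mem_append.1 ht' with hmem | hmem
      · obtain ⟨x, -, rfl⟩ := List.mem_map.1 hmem
        -- A + fA x : N via option x.1 + fA x
        refine not_ppos_of_mem ?_ (mem_opts_add_left A (fA x) x.2) (hfA2 x)
        rw [act_add, hfA1 x, Bool.or_true]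
      · obtain ⟨y, -, rfl⟩ := List.mem_map.1 hmem
        exact hfB3 y
  · refine ppos_intro ?_
    intro W hW
    rcases mem_opts_add_cases hW with ⟨B', hB', rfl⟩ | ⟨t', ht', rfl⟩
    · have hmem : fB ⟨B', hB'⟩ ∈ (mk ts true).opts := by
        rw [opts_mk, hts]
        exact List.mem_append_right _ (List.mem_map.2 ⟨⟨B', hB'⟩, List.mem_attach _ _, rfl⟩)
      refine not_ppos_of_mem ?_ (mem_opts_add_right B' _ hmem) (hfB2 ⟨B', hB'⟩)
      rw [act_add, act_mk, Bool.or_true]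
    · rw [opts_mk, hts] at ht'
      rcases List.mem_append.1 ht' with hmem | hmem
      · obtain ⟨x, -, rfl⟩ := List.mem_map.1 hmem
        exact hfA3 x
      · obtain ⟨y, -, rfl⟩ := List.mem_map.1 hmem
        refine not_ppos_of_mem ?_ (mem_opts_add_left B (fB y) y.2) (hfB2 y)
        rw [act_add, hfB1 y, Bool.or_true]

end AGame
namespace AGame

theorem cov_aux (A B : AGame) (hact : A.act = B.act)
    (h1 : ∀ A' ∈ A.opts, ∃ B' ∈ B.opts, Equiv A' B')
    (h2 : ∀ B' ∈ B.opts, ∃ A' ∈ A.opts, Equiv A' B')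
    (X : AGame) : PPos (add A X) ↔ PPos (add B X) := by
  rw [ppos_iff, ppos_iff, act_add, act_add, hact]
  constructor
  · rintro (hf | hall)
    · exact Or.inl hf
    · refine Or.inr ?_
      intro W hW
      rcases mem_opts_add_cases hW with ⟨B', hB', rfl⟩ | ⟨X', hX', rfl⟩
      · obtain ⟨A', hA', hE⟩ := h2 B' hB'
        have := hall _ (mem_opts_add_left A X hA')
        exact fun hp => this ((hE X).2 hp)
      · have := hall _ (mem_opts_add_right A X hX')
        exact fun hp => this ((cov_aux A B hact h1 h2 X').2 hp)
  · rintro (hf | hall)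
    · exact Or.inl hf
    · refine Or.inr ?_
      intro W hW
      rcases mem_opts_add_cases hW with ⟨A', hA', rfl⟩ | ⟨X', hX', rfl⟩
      · obtain ⟨B', hB', hE⟩ := h1 A' hA'
        have := hall _ (mem_opts_add_left B X hB')
        exact fun hp => this ((hE X).1 hp)
      · have := hall _ (mem_opts_add_right B X hX')
        exact fun hp => this ((cov_aux A B hact h1 h2 X').1 hp)
termination_by sizeOf X
decreasing_by
  · exact sizeOf_lt_of_mem hX'
  · exact sizeOf_lt_of_mem hX'

theorem equiv_of_cov {A B : AGame} (hact : A.act = B.act)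
    (h1 : ∀ A' ∈ A.opts, ∃ B' ∈ B.opts, Equiv A' B')
    (h2 : ∀ B' ∈ B.opts, ∃ A' ∈ A.opts, Equiv A' B') : Equiv A B :=
  fun X => cov_aux A B hact h1 h2 X

theorem bypass_aux (l m : List AGame) (g : Bool) (R : AGame)
    (hR : Equiv R (mk l g)) (hact : R.act = g)
    (hsub : ∀ r ∈ R.opts, r ∈ m) (hsup : ∀ x ∈ m, x ∈ l ∨ x ∈ R.opts)
    (X : AGame) : PPos (add (mk m g) X) ↔ PPos (add (mk l g) X) := by
  rcases hga : (g || X.act) with hfalse | htrue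
  · constructor <;> intro _ <;>
      exact ppos_of_act_false (by rw [act_add, act_mk]; exact hga)
  · have hactK : (add (mk m g) X).act = true := by rw [act_add, act_mk]; exact hga
    have hactG : (add (mk l g) X).act = true := by rw [act_add, act_mk]; exact hga
    have hactR : (add R X).act = true := by rw [act_add, hact]; exact hga
    constructor
    · intro hK
      by_contra hG
      have hRX : ¬ PPos (add R X) := fun hp => hG ((hR X).1 hp)
      obtain ⟨-, W, hW, hp⟩ := not_ppos_iff.1 hRX
      rcases mem_opts_add_cases hW with ⟨r, hr, rfl⟩ | ⟨X', hX', rfl⟩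
      · exact ppos_elim hK hactK (mem_opts_add_left _ X (hsub r hr)) hp
      · have : PPos (add (mk m g) X') :=
          (bypass_aux l m g R hR hact hsub hsup X').2 ((hR X').1 hp)
        exact ppos_elim hK hactK (mem_opts_add_right _ X hX') this
    · intro hG
      refine ppos_intro ?_
      intro W hW
      rcases mem_opts_add_cases hW with ⟨x, hx, rfl⟩ | ⟨X', hX', rfl⟩
      · rcases hsup x hx with hxl | hxR
        · exact ppos_elim hG hactG (mem_opts_add_left _ X hxl)
        · have hRX : PPos (add R X) := (hR X).2 hG
          exact ppos_elim hRX hactR (mem_opts_add_left _ X hxR)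
      · intro hp
        exact ppos_elim hG hactG (mem_opts_add_right _ X hX')
          ((bypass_aux l m g R hR hact hsub hsup X').1 hp)
termination_by sizeOf X
decreasing_by
  · exact sizeOf_lt_of_mem hX'
  · exact sizeOf_lt_of_mem hX'

theorem bypass {l m : List AGame} {g : Bool} {R : AGame}
    (hR : Equiv R (mk l g)) (hact : R.act = g)
    (hsub : ∀ r ∈ R.opts, r ∈ m) (hsup : ∀ x ∈ m, x ∈ l ∨ x ∈ R.opts) :
    Equiv (mk m g) (mk l g) :=
  fun X => bypass_aux l m g R hR hact hsub hsup X

theorem canonical_iff (G : AGame) : Canonical G ↔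
    ((∀ G' ∈ G.opts, Canonical G') ∧ ∀ G' ∈ G.opts, ¬ Reversible G G') := by
  rw [Canonical]
  simp only [List.mem_attach, true_implies, Subtype.forall]

theorem canonical_of_mem {G G' : AGame} (h : Canonical G) (hm : G' ∈ G.opts) : Canonical G' :=
  ((canonical_iff G).1 h).1 G' hm

theorem identical_iff (G H : AGame) : Identical G H ↔
    (G.act = H.act ∧ (∀ G' ∈ G.opts, ∃ H' ∈ H.opts, Identical G' H')
      ∧ (∀ H' ∈ H.opts, ∃ G' ∈ G.opts, Identical G' H')) := by
  rw [Identical]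
  constructor
  · rintro ⟨h0, h1, h2⟩
    refine ⟨h0, ?_, ?_⟩
    · intro G' hG'
      obtain ⟨H', hm, hid⟩ := h1 ⟨G', hG'⟩ (List.mem_attach _ _)
      exact ⟨H'.1, H'.2, hid⟩
    · intro H' hH'
      obtain ⟨G', hm, hid⟩ := h2 ⟨H', hH'⟩ (List.mem_attach _ _)
      exact ⟨G'.1, G'.2, hid⟩
  · rintro ⟨h0, h1, h2⟩
    refine ⟨h0, ?_, ?_⟩
    · rintro ⟨G', hG'⟩ -
      obtain ⟨H', hm, hid⟩ := h1 G' hG'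
      exact ⟨⟨H', hm⟩, List.mem_attach _ _, hid⟩
    · rintro ⟨H', hH'⟩ -
      obtain ⟨G', hm, hid⟩ := h2 H' hH'
      exact ⟨⟨G', hm⟩, List.mem_attach _ _, hid⟩

end AGame
namespace AGame

theorem list_sizeOf_append (a b : List AGame) : sizeOf (a ++ b) + 1 = sizeOf a + sizeOf b := by
  induction a with
  | nil => simp; omega
  | cons x t ih => simp only [List.cons_append, List.cons.sizeOf_spec]; omega

theorem list_sizeOf_erase {a : AGame} {l : List AGame} (h : a ∈ l) :
    sizeOf (l.erase a) + sizeOf a + 1 = sizeOf l := by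
  induction l with
  | nil => cases h
  | cons x t ih =>
    by_cases hx : x = a
    · subst hx
      rw [List.erase_cons_head]
      simp only [List.cons.sizeOf_spec]; omega
    · have hne : ¬ (x == a) = true := by simp [hx]
      rw [List.erase_cons_tail (by simpa using hx)]
      have hat : a ∈ t := by
        rcases List.mem_cons.1 h with h' | h'
        · exact absurd h'.symm hx
        · exact h'
      simp only [List.cons.sizeOf_spec]
      have := ih hat
      omega

theorem sizeOf_opts_lt (G : AGame) : sizeOf G.opts < sizeOf G := by
  cases G with
  | mk gs g => simp [opts, AGame.mk.sizeOf_spec]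

theorem simplify (g : Bool) (l : List AGame) (hc : ∀ x ∈ l, Canonical x) :
    ∃ m : List AGame, Canonical (mk m g) ∧ Equiv (mk m g) (mk l g) := by
  classical
  by_cases hrev : ∀ K' ∈ l, ¬ Reversible (mk l g) K'
  · refine ⟨l, (canonical_iff _).2 ⟨?_, ?_⟩, Equiv.refl _⟩
    · intro G' hG'; rw [opts_mk] at hG'; exact hc G' hG'
    · intro G' hG'; rw [opts_mk] at hG'; exact hrev G' hG'
  · push_neg at hrev
    obtain ⟨K', hK'l, R, hRmem, hREq⟩ := hrev
    have hRact : R.act = g := by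
      have := act_eq_of_equiv hREq; rwa [act_mk] at this
    have hRcan : Canonical R := canonical_of_mem (hc K' hK'l) hRmem
    have hEq0 : Equiv (mk (R.opts ++ l.erase K') g) (mk l g) := by
      refine bypass hREq hRact ?_ ?_
      · intro r hr; exact List.mem_append_left _ hr
      · intro x hx
        rcases List.mem_append.1 hx with hx | hx
        · exact Or.inr hx
        · exact Or.inl (List.mem_of_mem_erase hx)
    have hc0 : ∀ x ∈ R.opts ++ l.erase K', Canonical x := by
      intro x hx
      rcases List.mem_append.1 hx with hx | hx
      · exact canonical_of_mem hRcan hx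
      · exact hc x (List.mem_of_mem_erase hx)
    obtain ⟨m, hcan, hEq⟩ := simplify g (R.opts ++ l.erase K') hc0
    exact ⟨m, hcan, hEq.trans hEq0⟩
termination_by sizeOf l
decreasing_by
  have h1 := list_sizeOf_append R.opts (l.erase K')
  have h2 := list_sizeOf_erase hK'l
  have h3 := sizeOf_opts_lt R
  have h4 := sizeOf_lt_of_mem hRmem
  omega

theorem exists_canonical (G : AGame) : ∃ H : AGame, Canonical H ∧ Equiv G H := by
  classical
  have spec : ∀ x : {x // x ∈ G.opts}, ∃ H : AGame, Canonical H ∧ Equiv x.1 H :=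
    fun x => exists_canonical x.1
  choose f hf1 hf2 using spec
  have hEq1 : Equiv G (mk (G.opts.attach.map f) G.act) := by
    refine equiv_of_cov (by rw [act_mk]) ?_ ?_
    · intro A' hA'
      refine ⟨f ⟨A', hA'⟩, ?_, hf2 ⟨A', hA'⟩⟩
      rw [opts_mk]
      exact List.mem_map.2 ⟨⟨A', hA'⟩, List.mem_attach _ _, rfl⟩
    · intro B' hB'
      rw [opts_mk] at hB'
      obtain ⟨x, -, rfl⟩ := List.mem_map.1 hB'
      exact ⟨x.1, x.2, hf2 x⟩
  have hcs : ∀ x ∈ G.opts.attach.map f, Canonical x := by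
    intro x hx
    obtain ⟨y, -, rfl⟩ := List.mem_map.1 hx
    exact hf1 y
  obtain ⟨m, hcan, hEq2⟩ := simplify G.act (G.opts.attach.map f) hcs
  exact ⟨mk m G.act, hcan, hEq1.trans hEq2.symm⟩
termination_by sizeOf G
decreasing_by exact sizeOf_lt_of_mem x.2

theorem key_lemma {H K H' : AGame} (hHK : Equiv H K) (hm : H' ∈ H.opts)
    (hnr : ¬ Reversible H H') : ∃ K' ∈ K.opts, Equiv H' K' := by
  by_contra hno
  push_neg at hno
  have hbt : Bowtie H' K :=
    ⟨fun H'' hmem hEq => hnr ⟨H'', hmem, hEq.trans hHK.symm⟩, hno⟩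
  obtain ⟨T, hTact, hT1, hT2⟩ := link hbt
  have hHT : PPos (add H T) := (hHK T).2 hT2
  exact ppos_elim hHT (by rw [act_add, hTact, Bool.or_true])
    (mem_opts_add_left H T hm) hT1

theorem unique_canonical (H K : AGame) (hH : Canonical H) (hK : Canonical K)
    (hE : Equiv H K) : Identical H K := by
  rw [identical_iff]
  refine ⟨act_eq_of_equiv hE, ?_, ?_⟩
  · intro H' hH'
    obtain ⟨K', hK', hEq⟩ := key_lemma hE hH' (((canonical_iff H).1 hH).2 H' hH')
    exact ⟨K', hK',
      unique_canonical H' K' (canonical_of_mem hH hH') (canonical_of_mem hK hK') hEq⟩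
  · intro K' hK'
    obtain ⟨H', hH', hEq⟩ := key_lemma hE.symm hK' (((canonical_iff K).1 hK).2 K' hK')
    exact ⟨H', hH',
      unique_canonical H' K' (canonical_of_mem hH hH') (canonical_of_mem hK hK') hEq.symm⟩
termination_by sizeOf H + sizeOf K
decreasing_by
  · have := sizeOf_lt_of_mem hH'; have := sizeOf_lt_of_mem hK'; omega
  · have := sizeOf_lt_of_mem hH'; have := sizeOf_lt_of_mem hK'; omega

end AGame

/-- Canonical Form Theorem: every game is equivalent to a unique (up to ≅) canonical game. -/
theorem AGame.canonical_form (G : AGame) :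
    ∃ H : AGame, AGame.Canonical H ∧ AGame.Equiv G H ∧
      ∀ H2 : AGame, AGame.Canonical H2 → AGame.Equiv G H2 → AGame.Identical H2 H := by
  obtain ⟨H, hc, he⟩ := AGame.exists_canonical G
  exact ⟨H, hc, he, fun H2 hc2 he2 =>
    AGame.unique_canonical H2 H hc2 hc (he2.symm.trans he)⟩
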